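/- Fix m, l, g > 0, ρ ∈ ℝ, χ ∈ ℝ³, and a symmetric positive-definite 3×3 real matrix 𝕀. Let Ω, v, Γ : ℝ → ℝ³ solve the closed-loop Euler–Poincaré system. Then the three functions t ↦ ‖p(t)‖², t ↦ p(t)·Γ(t), and t ↦ ‖Γ(t)‖² are constant in t, where p(t) = ρ v(t) + m l (Ω(t) × χ). -/

import Mathlib

open Matrix

/-- The closed-loop Euler–Poincaré system: with `μ = 𝕀Ω + m l (χ × v)` and
`p = ρ v + m l (Ω × χ)`, the curves satisfy
`μ' = μ × Ω + p × v − m g l (χ × Γ)`, `p' = p × Ω`, `Γ' = Γ × Ω`. -/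
def ClosedLoopEP (m l g ρ : ℝ) (χ : Fin 3 → ℝ) (I : Matrix (Fin 3) (Fin 3) ℝ)
    (Ω v Γ : ℝ → Fin 3 → ℝ) : Prop :=
  Differentiable ℝ Ω ∧ Differentiable ℝ v ∧ Differentiable ℝ Γ ∧
  (∀ t, deriv (fun s => I *ᵥ Ω s + (m * l) • (χ ⨯₃ v s)) t
      = (I *ᵥ Ω t + (m * l) • (χ ⨯₃ v t)) ⨯₃ Ω t
        + (ρ • v t + (m * l) • (Ω t ⨯₃ χ)) ⨯₃ v t - (m * g * l) • (χ ⨯₃ Γ t)) ∧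
  (∀ t, deriv (fun s => ρ • v s + (m * l) • (Ω s ⨯₃ χ)) t
      = (ρ • v t + (m * l) • (Ω t ⨯₃ χ)) ⨯₃ Ω t) ∧
  (∀ t, deriv Γ t = Γ t ⨯₃ Ω t)

/-! Along the flow, the momentum `p` and the direction `Γ` both evolve by `x' = x × Ω` for the
same `Ω`. Such an evolution is an infinitesimal rotation, so it preserves dot products: the
derivative of `x ⬝ᵥ y` is `(x × Ω) ⬝ᵥ y + x ⬝ᵥ (y × Ω)`, which vanishes by the cyclic symmetry
of the triple product. -/

theorem HasDerivAt.dotProduct {𝕜 ι : Type*} [NontriviallyNormedField 𝕜] [Fintype ι]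
    {f g : 𝕜 → ι → 𝕜} {f' g' : ι → 𝕜} {t : 𝕜}
    (hf : HasDerivAt f f' t) (hg : HasDerivAt g g' t) :
    HasDerivAt (fun s => f s ⬝ᵥ g s) (f' ⬝ᵥ g t + f t ⬝ᵥ g') t := by
  have hcoord (i : ι) : HasDerivAt (fun s => f s i * g s i) (f' i * g t i + f t i * g' i) t :=
    (hasDerivAt_pi.1 hf i).mul (hasDerivAt_pi.1 hg i)
  have hsum := HasDerivAt.fun_sum (u := Finset.univ) fun i _ => hcoord i
  rw [Finset.sum_add_distrib] at hsum
  exact hsum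

theorem Differentiable.crossProduct_const {𝕜 E : Type*} [NontriviallyNormedField 𝕜]
    [CompleteSpace 𝕜] [NormedAddCommGroup E] [NormedSpace 𝕜 E] {f : E → Fin 3 → 𝕜}
    (hf : Differentiable 𝕜 f) (c : Fin 3 → 𝕜) : Differentiable 𝕜 fun s => f s ⨯₃ c :=
  (LinearMap.toContinuousLinearMap ((crossProduct (R := 𝕜)).flip c)).differentiable.comp hf

theorem cross_dotProduct_add_dotProduct_cross {R : Type*} [CommRing R] (u v w : Fin 3 → R) :
    (u ⨯₃ w) ⬝ᵥ v + u ⬝ᵥ (v ⨯₃ w) = 0 := by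
  rw [triple_product_permutation u, ← cross_anticomm, neg_dotProduct, dotProduct_comm,
    neg_add_cancel]

theorem dotProduct_eq_of_hasDerivAt_cross {𝕜 : Type*} [RCLike 𝕜] {Ω x y : 𝕜 → Fin 3 → 𝕜}
    (hx : ∀ t, HasDerivAt x (x t ⨯₃ Ω t) t) (hy : ∀ t, HasDerivAt y (y t ⨯₃ Ω t) t)
    (s t : 𝕜) : x s ⬝ᵥ y s = x t ⬝ᵥ y t := by
  have hxy (r : 𝕜) : HasDerivAt (fun u => x u ⬝ᵥ y u) 0 r := by
    simpa only [cross_dotProduct_add_dotProduct_cross] using (hx r).dotProduct (hy r)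
  exact is_const_of_deriv_eq_zero (fun r => (hxy r).differentiableAt)
    (fun r => (hxy r).deriv) s t

namespace ClosedLoopEP

variable {m l g ρ : ℝ} {χ : Fin 3 → ℝ} {I : Matrix (Fin 3) (Fin 3) ℝ} {Ω v Γ : ℝ → Fin 3 → ℝ}

theorem hasDerivAt_momentum (h : ClosedLoopEP m l g ρ χ I Ω v Γ) (t : ℝ) :
    HasDerivAt (fun s => ρ • v s + (m * l) • (Ω s ⨯₃ χ))
      ((ρ • v t + (m * l) • (Ω t ⨯₃ χ)) ⨯₃ Ω t) t := by
  obtain ⟨hΩ, hv, -, -, hp, -⟩ := h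
  have hdiff : Differentiable ℝ fun s => ρ • v s + (m * l) • (Ω s ⨯₃ χ) :=
    (hv.const_smul ρ).add ((hΩ.crossProduct_const χ).const_smul (m * l))
  exact hp t ▸ (hdiff t).hasDerivAt

theorem hasDerivAt_direction (h : ClosedLoopEP m l g ρ χ I Ω v Γ) (t : ℝ) :
    HasDerivAt Γ (Γ t ⨯₃ Ω t) t :=
  h.2.2.2.2.2 t ▸ (h.2.2.1 t).hasDerivAt

end ClosedLoopEP

theorem casimirs_constant_general (m l g ρ : ℝ)
    (χ : Fin 3 → ℝ) (I : Matrix (Fin 3) (Fin 3) ℝ)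
    (Ω v Γ : ℝ → Fin 3 → ℝ) (hsol : ClosedLoopEP m l g ρ χ I Ω v Γ)
    (p : ℝ → Fin 3 → ℝ) (hp : ∀ t, p t = ρ • v t + (m * l) • (Ω t ⨯₃ χ)) :
    (∀ t, p t ⬝ᵥ p t = p 0 ⬝ᵥ p 0) ∧
    (∀ t, p t ⬝ᵥ Γ t = p 0 ⬝ᵥ Γ 0) ∧
    (∀ t, Γ t ⬝ᵥ Γ t = Γ 0 ⬝ᵥ Γ 0) := by
  have hpΩ (t : ℝ) : HasDerivAt p (p t ⨯₃ Ω t) t := by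
    rw [funext hp]
    exact hsol.hasDerivAt_momentum t
  have hΓΩ := hsol.hasDerivAt_direction
  exact ⟨(dotProduct_eq_of_hasDerivAt_cross hpΩ hpΩ · 0),
    (dotProduct_eq_of_hasDerivAt_cross hpΩ hΓΩ · 0),
    (dotProduct_eq_of_hasDerivAt_cross hΓΩ hΓΩ · 0)⟩

/-- Along solutions of the closed-loop Euler–Poincaré system, the three Casimir
functions `‖p‖²`, `p·Γ` and `‖Γ‖²` are constant in time. -/
theorem casimirs_constant (m l g ρ : ℝ) (hm : 0 < m) (hl : 0 < l) (hg : 0 < g)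
    (χ : Fin 3 → ℝ) (I : Matrix (Fin 3) (Fin 3) ℝ) (hIsymm : Iᵀ = I)
    (hIpos : ∀ x : Fin 3 → ℝ, x ≠ 0 → 0 < x ⬝ᵥ I *ᵥ x)
    (Ω v Γ : ℝ → Fin 3 → ℝ) (hsol : ClosedLoopEP m l g ρ χ I Ω v Γ)
    (p : ℝ → Fin 3 → ℝ) (hp : ∀ t, p t = ρ • v t + (m * l) • (Ω t ⨯₃ χ)) :
    (∀ t, p t ⬝ᵥ p t = p 0 ⬝ᵥ p 0) ∧
    (∀ t, p t ⬝ᵥ Γ t = p 0 ⬝ᵥ Γ 0) ∧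
    (∀ t, Γ t ⬝ᵥ Γ t = Γ 0 ⬝ᵥ Γ 0) :=
  casimirs_constant_general m l g ρ χ I Ω v Γ hsol p hp
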